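/- arXiv:1304.1445 — 2 statements merged into one kernel-verified Lean document; each statement's English description precedes it below -/
import Mathlib

section
/- Let P be a probability measure on Σ = {1,...,k}^N such that each coordinate equals any given symbol with conditional probability at least p > 0 regardless of preceding outcomes. Fix a measurable set A_n ⊆ Σ that is determined by the first n coordinates, and suppose that for every cylinder of length n not contained in A_n there is a word σ of length at most ℓ such that appending σ forces membership in A_{n+ℓ}, where A_m ⊆ A_{m'} for m ≤ m'. Then P(Σ \ ⋃_n A_n) ≤ lim_{n→∞} (1 - p^ℓ)^{1 + ⌊n/ℓ⌋} = 0. -/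
/-!
Split the sequence space into the cylinders of length `n`. A cylinder not yet inside `A n` has,
by hypothesis, an extension of length `t ≤ ℓ` inside `A (n + ℓ)`, and applying the conditional
lower bound `t` times shows that this extension carries at least `p ^ t ≥ p ^ ℓ` of the
cylinder's mass. Summing over cylinders, `P (A (n + ℓ))ᶜ ≤ (1 - p ^ ℓ) * P (A n)ᶜ`, and iterating
gives `P (⋃ n, A n)ᶜ ≤ P (A (m * ℓ))ᶜ ≤ (1 - p ^ ℓ) ^ m`.
-/

open MeasureTheory Set ENNReal Filter Topology

variable {α : Type*}

def wordCylinder (n : ℕ) (υ : Fin n → α) : Set (ℕ → α) :=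
  {ω | ∀ j : Fin n, ω j = υ j}

def DeterminedByPrefix (n : ℕ) (S : Set (ℕ → α)) : Prop :=
  ∀ ω ω' : ℕ → α, (∀ j < n, ω j = ω' j) → (ω ∈ S ↔ ω' ∈ S)

def ForcedWithin (A : ℕ → Set (ℕ → α)) (ℓ n : ℕ) : Prop :=
  ∀ υ : Fin n → α, ¬ wordCylinder n υ ⊆ A n →
    ∃ t ≤ ℓ, ∃ σ : Fin t → α, wordCylinder (n + t) (Fin.append υ σ) ⊆ A (n + t)

lemma iUnion_wordCylinder (n : ℕ) : ⋃ υ : Fin n → α, wordCylinder n υ = univ :=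
  eq_univ_of_forall fun ω => mem_iUnion.2 ⟨fun j => ω j, fun _ => rfl⟩

lemma pairwise_disjoint_wordCylinder (n : ℕ) :
    Pairwise fun υ υ' : Fin n → α => Disjoint (wordCylinder n υ) (wordCylinder n υ') :=
  fun _ _ hne => disjoint_left.2 fun _ hω hω' => hne (funext fun j => (hω j).symm.trans (hω' j))

lemma wordCylinder_append {n t : ℕ} (υ : Fin n → α) (σ : Fin t → α) :
    wordCylinder (n + t) (Fin.append υ σ) =
      {ω | (∀ j : Fin n, ω j = υ j) ∧ ∀ j : Fin t, ω (n + j) = σ j} := by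
  ext ω
  simp only [wordCylinder, mem_ofPred_eq, Fin.forall_fin_add, Fin.append_left, Fin.append_right,
    Fin.val_castAdd, Fin.val_natAdd]

lemma DeterminedByPrefix.wordCylinder_subset_compl {n : ℕ} {S : Set (ℕ → α)}
    (hS : DeterminedByPrefix n S) {υ : Fin n → α} (h : ¬ wordCylinder n υ ⊆ S) :
    wordCylinder n υ ⊆ Sᶜ := fun ω hω hωS =>
  h fun ω' hω' => (hS ω ω' fun j hj => (hω ⟨j, hj⟩).trans (hω' ⟨j, hj⟩).symm).1 hωS

section Measure

variable [MeasurableSpace α] [MeasurableSingletonClass α]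

lemma measurableSet_wordCylinder (n : ℕ) (υ : Fin n → α) : MeasurableSet (wordCylinder n υ) := by
  rw [wordCylinder, ofPred_forall]
  exact .iInter fun j => (measurableSet_singleton (υ j)).preimage (measurable_pi_apply (j : ℕ))

lemma measure_eq_tsum_wordCylinder_inter [Countable α] (μ : Measure (ℕ → α)) (n : ℕ)
    (S : Set (ℕ → α)) : μ S = ∑' υ : Fin n → α, μ (wordCylinder n υ ∩ S) := by
  -- working with `μ.restrict S` needs no measurability of `S`
  calc μ S = μ.restrict S (⋃ υ : Fin n → α, wordCylinder n υ) := by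
        rw [iUnion_wordCylinder, Measure.restrict_apply_univ]
    _ = ∑' υ, μ.restrict S (wordCylinder n υ) :=
        measure_iUnion (pairwise_disjoint_wordCylinder n) (measurableSet_wordCylinder n)
    _ = _ := by simp only [Measure.restrict_apply (measurableSet_wordCylinder n _)]

end Measure

lemma measure_diff_le_one_sub_mul {β : Type*} [MeasurableSpace β] {μ : Measure β}
    {C D E : Set β} {q : ℝ≥0∞} (hC : μ C ≠ ∞) (hDC : D ⊆ C) (hDE : D ⊆ E)
    (hD : NullMeasurableSet D μ) (hq : q * μ C ≤ μ D) : μ (C \ E) ≤ (1 - q) * μ C :=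
  calc μ (C \ E) ≤ μ (C \ D) := measure_mono (sdiff_subset_sdiff_right hDE)
    _ = μ C - μ D := measure_sdiff hDC hD (ne_top_of_le_ne_top hC (measure_mono hDC))
    _ ≤ μ C - q * μ C := tsub_le_tsub_left hq _
    _ = (1 - q) * μ C := by rw [ENNReal.sub_mul fun _ _ => hC, one_mul]

lemma apply_mul_le_pow_of_add_le_mul {f : ℕ → ℝ≥0∞} {r : ℝ≥0∞} {ℓ : ℕ} (h0 : f 0 ≤ 1)
    (hstep : ∀ n, f (n + ℓ) ≤ r * f n) (m : ℕ) : f (m * ℓ) ≤ r ^ m := by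
  induction m with
  | zero => simpa using h0
  | succ m ih =>
    calc f ((m + 1) * ℓ) = f (m * ℓ + ℓ) := by rw [Nat.succ_mul]
      _ ≤ r * f (m * ℓ) := hstep _
      _ ≤ r * r ^ m := by gcongr
      _ = r ^ (m + 1) := (pow_succ' r m).symm

lemma tendsto_pow_one_add_div_atTop_nhds_zero {r : ℝ≥0∞} (hr : r < 1) {ℓ : ℕ} (hℓ : 0 < ℓ) :
    Tendsto (fun n : ℕ => r ^ (1 + n / ℓ)) atTop (𝓝 0) :=
  (ENNReal.tendsto_pow_atTop_nhds_zero_of_lt_one hr).comp <|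
    tendsto_atTop_atTop.2 fun b =>
      ⟨b * ℓ, fun _ hn => ((Nat.le_div_iff_mul_le hℓ).2 hn).trans (Nat.le_add_left _ _)⟩

section Escape

variable [MeasurableSpace α] {P : Measure (ℕ → α)} {p : ℝ≥0∞}

def CondProbLowerBound (P : Measure (ℕ → α)) (p : ℝ≥0∞) : Prop :=
  ∀ n (υ : Fin n → α) i, p * P (wordCylinder n υ) ≤ P {ω | ω ∈ wordCylinder n υ ∧ ω n = i}

lemma pow_mul_measure_wordCylinder_le (hP : CondProbLowerBound P p)
    {n t : ℕ} (υ : Fin n → α) (σ : Fin t → α) :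
    p ^ t * P (wordCylinder n υ) ≤ P (wordCylinder (n + t) (Fin.append υ σ)) := by
  induction t with
  | zero =>
    simp only [pow_zero, one_mul, wordCylinder_append, IsEmpty.forall_iff, and_true]
    exact le_rfl
  | succ t ih =>
    have hsplit : wordCylinder (n + (t + 1)) (Fin.append υ σ) =
        {ω | ω ∈ wordCylinder (n + t) (Fin.append υ (Fin.init σ)) ∧
          ω (n + t) = σ (Fin.last t)} := by
      simp only [wordCylinder_append, Fin.forall_fin_succ', Fin.init, Fin.val_castSucc,
        Fin.val_last, mem_ofPred_eq, and_assoc]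
    calc p ^ (t + 1) * P (wordCylinder n υ) = p * (p ^ t * P (wordCylinder n υ)) := by ring
      _ ≤ p * P (wordCylinder (n + t) (Fin.append υ (Fin.init σ))) := by gcongr; exact ih _
      _ ≤ _ := hsplit ▸ hP _ _ _

variable [MeasurableSingletonClass α] [IsFiniteMeasure P] {A : ℕ → Set (ℕ → α)} {n ℓ : ℕ}

lemma measure_wordCylinder_inter_compl_add_le (hp1 : p ≤ 1)
    (hP : CondProbLowerBound P p)
    (hAmono : Monotone A) (hAdet : DeterminedByPrefix n (A n))
    (hforce : ForcedWithin A ℓ n)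
    (υ : Fin n → α) :
    P (wordCylinder n υ ∩ (A (n + ℓ))ᶜ) ≤ (1 - p ^ ℓ) * P (wordCylinder n υ ∩ (A n)ᶜ) := by
  by_cases hυ : wordCylinder n υ ⊆ A n
  · rw [(hυ.trans (hAmono (Nat.le_add_right n ℓ))).disjoint_compl_right.inter_eq, measure_empty]
    exact zero_le
  rw [inter_eq_left.2 (hAdet.wordCylinder_subset_compl hυ)]
  obtain ⟨t, ht, σ, hσ⟩ := hforce υ hυ
  refine measure_diff_le_one_sub_mul (measure_ne_top P _) ?_
    (hσ.trans (hAmono (Nat.add_le_add_left ht n)))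
    (measurableSet_wordCylinder _ _).nullMeasurableSet ?_
  · exact fun ω hω => ((wordCylinder_append υ σ).le hω).1
  · calc p ^ ℓ * P (wordCylinder n υ) ≤ p ^ t * P (wordCylinder n υ) := by
          gcongr ?_ * _; exact pow_le_pow_of_le_one zero_le hp1 ht
      _ ≤ _ := pow_mul_measure_wordCylinder_le hP υ σ

lemma measure_compl_add_le [Countable α] (hp1 : p ≤ 1)
    (hP : CondProbLowerBound P p)
    (hAmono : Monotone A) (hAdet : DeterminedByPrefix n (A n))
    (hforce : ForcedWithin A ℓ n) :
    P (A (n + ℓ))ᶜ ≤ (1 - p ^ ℓ) * P (A n)ᶜ :=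
  calc P (A (n + ℓ))ᶜ = ∑' υ, P (wordCylinder n υ ∩ (A (n + ℓ))ᶜ) :=
        measure_eq_tsum_wordCylinder_inter P n _
    _ ≤ ∑' υ, (1 - p ^ ℓ) * P (wordCylinder n υ ∩ (A n)ᶜ) := ENNReal.tsum_le_tsum fun υ =>
        measure_wordCylinder_inter_compl_add_le hp1 hP hAmono hAdet hforce υ
    _ = (1 - p ^ ℓ) * P (A n)ᶜ := by
        rw [ENNReal.tsum_mul_left, ← measure_eq_tsum_wordCylinder_inter]

end Escape

theorem measure_escape_estimate_general
    {k : ℕ} (P : Measure (ℕ → Fin k)) [IsProbabilityMeasure P]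
    (p : ℝ≥0∞) (hp0 : 0 < p)
    -- each symbol appears with conditional probability at least `p`, regardless of the past
    (hP : ∀ (n : ℕ) (υ : Fin n → Fin k) (i : Fin k),
      p * P {ω | ∀ j : Fin n, ω (j : ℕ) = υ j} ≤
        P {ω | (∀ j : Fin n, ω (j : ℕ) = υ j) ∧ ω n = i})
    (A : ℕ → Set (ℕ → Fin k))
    (hAmono : ∀ m m', m ≤ m' → A m ⊆ A m')
    -- `A n` is determined by the first `n` coordinates
    (hAdet : ∀ n, ∀ ω ω' : ℕ → Fin k, (∀ j < n, ω j = ω' j) → (ω ∈ A n ↔ ω' ∈ A n))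
    (ℓ : ℕ) (hℓ : 0 < ℓ)
    -- every cylinder of length `n` not contained in `A n` admits a word `σ` of length
    -- `t ≤ ℓ` whose appending forces membership in `A (n + t)`
    (hforce : ∀ (n : ℕ) (υ : Fin n → Fin k),
      ¬ ({ω | ∀ j : Fin n, ω (j : ℕ) = υ j} ⊆ A n) →
      ∃ t ≤ ℓ, ∃ σ : Fin t → Fin k,
        {ω : ℕ → Fin k | (∀ j : Fin n, ω (j : ℕ) = υ j) ∧ ∀ j : Fin t, ω (n + j) = σ j}
          ⊆ A (n + t)) :
    P (Set.univ \ ⋃ n, A n) = 0 ∧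
      Filter.Tendsto (fun n : ℕ => (1 - p ^ ℓ) ^ (1 + n / ℓ)) Filter.atTop (nhds 0) ∧
      ∀ n : ℕ, P (Set.univ \ ⋃ m, A m) ≤ (1 - p ^ ℓ) ^ (1 + n / ℓ) := by
  have hp1 : p ≤ 1 := by
    obtain ⟨ω⟩ := nonempty_of_isProbabilityMeasure P
    simpa using (hP 0 Fin.elim0 (ω 0)).trans prob_le_one
  have hstep n : P (A (n + ℓ))ᶜ ≤ (1 - p ^ ℓ) * P (A n)ᶜ :=
    measure_compl_add_le hp1 hP hAmono (hAdet n) fun υ hυ => by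
      simpa only [wordCylinder_append] using hforce n υ hυ
  have hbound n : P (univ \ ⋃ m, A m) ≤ (1 - p ^ ℓ) ^ (1 + n / ℓ) :=
    (measure_mono fun ω hω hA => hω.2 (mem_iUnion_of_mem _ hA)).trans
      (apply_mul_le_pow_of_add_le_mul (f := fun n => P (A n)ᶜ) prob_le_one hstep _)
  have hlim := tendsto_pow_one_add_div_atTop_nhds_zero
    (ENNReal.sub_lt_self one_ne_top one_ne_zero (pow_ne_zero ℓ hp0.ne')) hℓ
  exact ⟨le_antisymm (ge_of_tendsto hlim (.of_forall hbound)) zero_le, hlim, hbound⟩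

theorem measure_escape_estimate
    {k : ℕ} (P : Measure (ℕ → Fin k)) [IsProbabilityMeasure P]
    (p : ℝ≥0∞) (hp0 : 0 < p) (hpk : p ≤ 1 / k)
    -- each symbol appears with conditional probability at least `p`, regardless of the past
    (hP : ∀ (n : ℕ) (υ : Fin n → Fin k) (i : Fin k),
      p * P {ω | ∀ j : Fin n, ω (j : ℕ) = υ j} ≤
        P {ω | (∀ j : Fin n, ω (j : ℕ) = υ j) ∧ ω n = i})
    (A : ℕ → Set (ℕ → Fin k)) (hAmeas : ∀ n, MeasurableSet (A n))
    (hAmono : ∀ m m', m ≤ m' → A m ⊆ A m')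
    -- `A n` is determined by the first `n` coordinates
    (hAdet : ∀ n, ∀ ω ω' : ℕ → Fin k, (∀ j < n, ω j = ω' j) → (ω ∈ A n ↔ ω' ∈ A n))
    (ℓ : ℕ) (hℓ : 0 < ℓ)
    -- every cylinder of length `n` not contained in `A n` admits a word `σ` of length
    -- `t ≤ ℓ` whose appending forces membership in `A (n + t)`
    (hforce : ∀ (n : ℕ) (υ : Fin n → Fin k),
      ¬ ({ω | ∀ j : Fin n, ω (j : ℕ) = υ j} ⊆ A n) →
      ∃ t ≤ ℓ, ∃ σ : Fin t → Fin k,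
        {ω : ℕ → Fin k | (∀ j : Fin n, ω (j : ℕ) = υ j) ∧ ∀ j : Fin t, ω (n + j) = σ j}
          ⊆ A (n + t)) :
    P (Set.univ \ ⋃ n, A n) = 0 ∧
      Filter.Tendsto (fun n : ℕ => (1 - p ^ ℓ) ^ (1 + n / ℓ)) Filter.atTop (nhds 0) ∧
      ∀ n : ℕ, P (Set.univ \ ⋃ m, A m) ≤ (1 - p ^ ℓ) ^ (1 + n / ℓ) :=
  measure_escape_estimate_general P p hp0 hP A hAmono hAdet ℓ hℓ hforce
end

section
/- Let f_1,...,f_k be orientation-preserving homeomorphisms of the circle generating a forward and backward minimal IFS, and assume some element of the semigroup is not conjugate to a rotation. Then the periodic points of IFS(f_1,...,f_k) are dense in S^1, where a point q is periodic if q is a fixed point of some element h of the semigroup. -/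
open Set

/-- Composition of generators along a finite word: `[i₁, ..., iₙ] ↦ f_{iₙ} ∘ ... ∘ f_{i₁}`. -/
def listComp {X : Type*} {k : ℕ} (f : Fin k → X → X) (l : List (Fin k)) : X → X :=
  fun x => l.foldl (fun y i => f i y) x

/-!
Let `h` be an element of the semigroup that is not conjugate to a rotation, with lift `H`. Some
interval `[a, b]` has images of arbitrarily small length under iterates of `H`. If
`H^[n] x₀ = x₀ + p` for some `x₀`, then `H^[n] ≠ id + p` (otherwise averaging `H^[j]`, `j < n`,
conjugates `h` to a rotation), and the orbit of a point moved by `H^[n] - p` is monotone and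
trapped between two fixed points, so consecutive orbit points converge together. If the rotation
number is irrational, the semiconjugacy `F` of `H` to the rotation is continuous and, as `h` is not
conjugate to a rotation, constant on some interval, whose images are then pairwise disjoint
modulo `1`.

Given an open set `U`, backward minimality brings a point of the contracted arc close to `U`, the
contraction shrinks the arc, and forward minimality, made uniform by a Lebesgue number, brings it
back: some word maps a small closed arc in `U` into itself, hence has a fixed point there.
-/

open Function Filter Metric Topology

local notation "𝕊" => AddCircle (1 : ℝ)

section listComp

variable {X Y : Type*} {k : ℕ}

theorem listComp_append (f : Fin k → X → X) (l₁ l₂ : List (Fin k)) :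
    listComp f (l₁ ++ l₂) = listComp f l₂ ∘ listComp f l₁ :=
  funext fun _ => List.foldl_append

theorem listComp_flatten_replicate (f : Fin k → X → X) (l : List (Fin k)) (n : ℕ) :
    listComp f (List.replicate n l).flatten = (listComp f l)^[n] := by
  induction n with
  | zero => rfl
  | succ n ih => rw [List.replicate_succ, List.flatten_cons, listComp_append, ih, iterate_succ]

theorem continuous_listComp [TopologicalSpace X] {f : Fin k → X → X} (hf : ∀ i, Continuous (f i))
    (l : List (Fin k)) : Continuous (listComp f l) := by
  induction l with
  | nil => exact continuous_id
  | cons i l ih => exact ih.comp (hf i)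

theorem strictMono_listComp [Preorder X] {f : Fin k → X → X} (hf : ∀ i, StrictMono (f i))
    (l : List (Fin k)) : StrictMono (listComp f l) := by
  induction l with
  | nil => exact strictMono_id
  | cons i l ih => exact ih.comp (hf i)

theorem semiconj_listComp {π : Y → X} {g : Fin k → Y → Y} {f : Fin k → X → X}
    (h : ∀ i, Semiconj π (g i) (f i)) (l : List (Fin k)) :
    Semiconj π (listComp g l) (listComp f l) := by
  induction l with
  | nil => exact Semiconj.id_right
  | cons i l ih => exact ih.comp_right (h i)

theorem listComp_reverse_listComp_symm [TopologicalSpace X] (f : Fin k → X ≃ₜ X)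
    (l : List (Fin k)) (x : X) :
    listComp (fun i => f i) l.reverse (listComp (fun i => (f i).symm) l x) = x := by
  induction l generalizing x with
  | nil => rfl
  | cons i l ih =>
    rw [List.reverse_cons, listComp_append, comp_apply]
    exact (congrArg (f i) (ih _)).trans ((f i).apply_symm_apply x)

theorem exists_forall_mapsTo_ball [PseudoMetricSpace X] [CompactSpace X] {f : Fin k → X → X}
    (hf : ∀ i, Continuous (f i))
    (hfwd : ∀ x, Dense {y | ∃ l : List (Fin k), l ≠ [] ∧ y = listComp f l x})
    {O : Set X} (hO : IsOpen O) (hOne : O.Nonempty) :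
    ∃ δ > 0, ∀ z, ∃ w : List (Fin k), w ≠ [] ∧ MapsTo (listComp f w) (ball z δ) O := by
  have : ∀ z, ∃ w : List (Fin k), w ≠ [] ∧ listComp f w z ∈ O := fun z => by
    obtain ⟨_, ⟨w, hw, rfl⟩, hwO⟩ := (hfwd z).exists_mem_open hO hOne
    exact ⟨w, hw, hwO⟩
  choose w hw hwO using this
  obtain ⟨δ, hδ, hball⟩ := lebesgue_number_lemma_of_metric isCompact_univ
    (fun z => hO.preimage (continuous_listComp hf (w z))) fun z _ => mem_iUnion.2 ⟨z, hwO z⟩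
  refine ⟨δ, hδ, fun z => ?_⟩
  obtain ⟨z', hz'⟩ := hball z (mem_univ z)
  exact ⟨w z', hw z', hz'⟩

end listComp

namespace CircleIFS

theorem coe_eq_coe_iff_exists_int {x y : ℝ} : (x : 𝕊) = y ↔ ∃ n : ℤ, y = x + n := by
  rw [eq_comm, ← sub_eq_zero, ← AddCircle.coe_sub, AddCircle.coe_eq_zero_iff]
  simp only [zsmul_eq_mul, mul_one]
  exact exists_congr fun n => by constructor <;> intro h <;> linarith

theorem coe_surjective : Surjective ((↑) : ℝ → 𝕊) := QuotientAddGroup.mk_surjective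

theorem dist_coe_le (x y : ℝ) : dist (x : 𝕊) y ≤ |x - y| := by
  rw [dist_eq_norm, ← AddCircle.coe_sub]
  exact QuotientAddGroup.norm_mk_le_norm

def IsConjRotation (g : 𝕊 → 𝕊) : Prop :=
  ∃ (φ : 𝕊 ≃ₜ 𝕊) (c : 𝕊), ∀ x, φ (g (φ.symm x)) = c + x

theorem exists_homeomorph_semiconj (Φ : CircleDeg1Lift) (hc : Continuous Φ) (hs : StrictMono Φ) :
    ∃ φ : 𝕊 ≃ₜ 𝕊, Semiconj ((↑) : ℝ → 𝕊) Φ φ := by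
  have hper : Periodic (fun x => (Φ x : 𝕊)) 1 := fun x => by simp [Φ.map_add_one]
  let φ₀ : 𝕊 → 𝕊 := hper.lift
  have hφ₀ : Semiconj ((↑) : ℝ → 𝕊) Φ φ₀ := fun _ => rfl
  have hinj : Injective φ₀ := by
    intro p q hpq
    obtain ⟨x, rfl⟩ := coe_surjective p
    obtain ⟨y, rfl⟩ := coe_surjective q
    rw [← hφ₀, ← hφ₀, coe_eq_coe_iff_exists_int] at hpq
    obtain ⟨n, hn⟩ := hpq
    rw [← Φ.map_add_int] at hn
    rw [hs.injective hn, coe_eq_coe_iff_exists_int]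
    exact ⟨n, rfl⟩
  have hsurj : Surjective φ₀ := by
    intro p
    obtain ⟨y, rfl⟩ := coe_surjective p
    obtain ⟨x, rfl⟩ := (CircleDeg1Lift.continuous_iff_surjective Φ).1 hc y
    exact ⟨x, rfl⟩
  have hcont : Continuous φ₀ := continuous_quot_lift _ (by fun_prop)
  exact ⟨Continuous.homeoOfEquivCompactToT2 (f := Equiv.ofBijective φ₀ ⟨hinj, hsurj⟩) hcont, hφ₀⟩

theorem isConjRotation_of_semiconj_add {h : 𝕊 → 𝕊} {H : ℝ → ℝ} (hH : Semiconj ((↑) : ℝ → 𝕊) H h)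
    (Φ : CircleDeg1Lift) (hc : Continuous Φ) (hs : StrictMono Φ) {τ : ℝ}
    (hΦ : ∀ x, Φ (H x) = Φ x + τ) : IsConjRotation h := by
  obtain ⟨φ, hφ⟩ := exists_homeomorph_semiconj Φ hc hs
  refine ⟨φ, τ, fun p => ?_⟩
  obtain ⟨x, rfl⟩ := (φ.surjective.comp coe_surjective) p
  rw [comp_apply, φ.symm_apply_apply, ← hH, ← hφ, ← hφ, hΦ, AddCircle.coe_add, add_comm]

theorem half_le_abs_intCast_add_half (z : ℤ) : 1 / 2 ≤ |(z : ℝ) + 1 / 2| := by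
  rcases le_or_gt 0 z with hz | hz
  · have : (0 : ℝ) ≤ z := by exact_mod_cast hz
    rw [abs_of_nonneg (by linarith)]
    linarith
  · have : (z : ℝ) ≤ -1 := by exact_mod_cast Int.le_sub_one_of_lt hz
    rw [abs_of_neg (by linarith)]
    linarith

/-- A continuous map sending a ball into the disjoint union of its integer translates stays in one
of them; the points `c + n + 1 / 2` lie in none of the translates and act as barriers. -/
theorem exists_int_mapsTo_closedBall {L : ℝ → ℝ} {c r : ℝ} (hL : ContinuousOn L (closedBall c r))
    (hr₀ : 0 ≤ r) (hr : r < 1 / 2)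
    (hmaps : MapsTo L (closedBall c r) (⋃ n : ℤ, closedBall (c + n) r)) :
    ∃ m : ℤ, MapsTo L (closedBall c r) (closedBall (c + m) r) := by
  have hpre : IsPreconnected (L '' closedBall c r) :=
    (convex_closedBall c r).isPreconnected.image L hL
  have key : ∀ x ∈ closedBall c r, ∀ y ∈ closedBall c r, ∀ m n : ℤ,
      L x ∈ closedBall (c + m) r → L y ∈ closedBall (c + n) r → m ≤ n := by
    intro x hx y hy m n hxm hyn
    by_contra! hnm
    have hnm' : (n : ℝ) + 1 ≤ m := by exact_mod_cast hnm
    simp only [mem_closedBall, Real.dist_eq, abs_le] at hxm hyn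
    obtain ⟨ξ, hξ, hLξ⟩ : c + n + 1 / 2 ∈ L '' closedBall c r :=
      hpre.Icc_subset (mem_image_of_mem L hy) (mem_image_of_mem L hx) ⟨by linarith, by linarith⟩
    obtain ⟨j, hj⟩ := mem_iUnion.1 (hmaps hξ)
    rw [mem_closedBall, Real.dist_eq, hLξ] at hj
    have := half_le_abs_intCast_add_half (n - j)
    push_cast at this
    rw [show c + n + 1 / 2 - (c + j) = (n : ℝ) - j + 1 / 2 by ring] at hj
    linarith
  obtain ⟨m, hm⟩ := mem_iUnion.1 (hmaps (mem_closedBall_self hr₀))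
  refine ⟨m, fun x hx => ?_⟩
  obtain ⟨n, hn⟩ := mem_iUnion.1 (hmaps hx)
  obtain rfl : n = m := le_antisymm (key x hx c (mem_closedBall_self hr₀) n m hn hm)
    (key c (mem_closedBall_self hr₀) x hx m n hm hn)
  exact hn

theorem exists_isFixedPt_of_mapsTo_closedBall {g : 𝕊 → 𝕊} {L : ℝ → ℝ} (hL : Continuous L)
    (hgL : Semiconj ((↑) : ℝ → 𝕊) L g) {p : 𝕊} {r : ℝ} (hr₀ : 0 ≤ r) (hr : r < 1 / 2)
    (hmaps : MapsTo g (closedBall p r) (closedBall p r)) : ∃ q ∈ closedBall p r, IsFixedPt g q := by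
  obtain ⟨c, rfl⟩ := coe_surjective p
  have hcoe : MapsTo ((↑) : ℝ → 𝕊) (closedBall c r) (closedBall (c : 𝕊) r) := fun x hx =>
    (dist_coe_le x c).trans (by rwa [mem_closedBall, Real.dist_eq] at hx)
  have hL' : MapsTo L (closedBall c r) (⋃ n : ℤ, closedBall (c + n) r) := by
    intro x hx
    have : L x ∈ (↑) ⁻¹' closedBall (c : 𝕊) r := by
      rw [mem_preimage, hgL x]
      exact hmaps (hcoe hx)
    simpa [AddCircle.coe_real_preimage_closedBall_eq_iUnion] using this
  obtain ⟨m, hm⟩ := exists_int_mapsTo_closedBall hL.continuousOn hr₀ hr hL'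
  have hmaps' : MapsTo (fun x => L x - m) (closedBall c r) (closedBall c r) := fun x hx => by
    simpa [mem_closedBall, Real.dist_eq, sub_sub, add_comm (m : ℝ)] using hm hx
  rw [Real.closedBall_eq_Icc] at hmaps' hcoe
  obtain ⟨x, hx, hfix⟩ :=
    exists_mem_Icc_isFixedPt_of_mapsTo (by fun_prop) (by linarith) hmaps'
  refine ⟨x, hcoe hx, ?_⟩
  rw [IsFixedPt, ← hgL, coe_eq_coe_iff_exists_int]
  exact ⟨-m, by push_cast; linarith [hfix.eq]⟩

theorem isConjRotation_of_iterate_eq_add_int {h : 𝕊 → 𝕊} (H : CircleDeg1Lift)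
    (hc : Continuous H) (hs : StrictMono H) (hH : Semiconj ((↑) : ℝ → 𝕊) H h) {n : ℕ} (hn : 0 < n)
    {p : ℤ} (hp : ∀ x, H^[n] x = x + p) : IsConjRotation h := by
  have hn' : (0 : ℝ) < n := Nat.cast_pos.2 hn
  have hiter : ∀ j x, H^[j] (x + 1) = H^[j] x + 1 := fun j x => by
    rw [← CircleDeg1Lift.coe_pow, CircleDeg1Lift.map_add_one]
  let Φ : CircleDeg1Lift :=
    ⟨⟨fun x => (∑ j ∈ Finset.range n, H^[j] x) / n, fun x y hxy => by
        dsimp only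
        gcongr with j
        exact H.monotone.iterate j hxy⟩, fun x => by
      dsimp only
      rw [Finset.sum_congr rfl fun j _ => hiter j x, Finset.sum_add_distrib]
      field_simp
      simp⟩
  have hΦs : StrictMono Φ := fun x y hxy => div_lt_div_of_pos_right
    (Finset.sum_lt_sum_of_nonempty (Finset.nonempty_range_iff.2 hn.ne') fun j _ =>
      hs.iterate j hxy) hn'
  have hΦc : Continuous Φ := (continuous_finsetSum _ fun j _ => hc.iterate j).div_const _
  refine isConjRotation_of_semiconj_add hH Φ hΦc hΦs (τ := p / n) fun x => ?_
  have hsum := Finset.sum_range_succ' (fun j => H^[j] x) n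
  rw [Finset.sum_range_succ, hp] at hsum
  change (∑ j ∈ Finset.range n, H^[j] (H x)) / n = (∑ j ∈ Finset.range n, H^[j] x) / n + p / n
  simp only [← iterate_succ_apply] at hsum ⊢
  rw [← add_div]
  congr 1
  simp only [iterate_zero, id_eq] at hsum
  linarith

theorem tendsto_iterate_succ_sub_iterate {g : ℝ → ℝ} (hg : Monotone g) {u y v : ℝ}
    (hu : IsFixedPt g u) (hv : IsFixedPt g v) (huy : u ≤ y) (hyv : y ≤ v) :
    Tendsto (fun j => g^[j + 1] y - g^[j] y) atTop (𝓝 0) := by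
  have hbdd : ∀ j, g^[j] y ∈ Icc u v := fun j =>
    ⟨(hu.iterate j).eq ▸ hg.iterate j huy, (hv.iterate j).eq ▸ hg.iterate j hyv⟩
  obtain ⟨ℓ, hℓ⟩ : ∃ ℓ, Tendsto (fun j => g^[j] y) atTop (𝓝 ℓ) := by
    rcases le_total y (g y) with h | h
    · exact ⟨_, tendsto_atTop_ciSup (hg.monotone_iterate_of_le_map h)
        ⟨v, forall_mem_range.2 fun j => (hbdd j).2⟩⟩
    · exact ⟨_, tendsto_atTop_ciInf (hg.antitone_iterate_of_map_le h)
        ⟨u, forall_mem_range.2 fun j => (hbdd j).1⟩⟩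
  simpa using (hℓ.comp (tendsto_add_atTop_nat 1)).sub hℓ

theorem exists_iterate_sub_lt_of_iterate_eq_add_int (H : CircleDeg1Lift) {n : ℕ} (hn : 0 < n)
    {p : ℤ} {x₀ y : ℝ} (hx₀ : H^[n] x₀ = x₀ + p) (hy : H^[n] y ≠ y + p) :
    ∃ a b, a < b ∧ ∀ δ > 0, ∃ m, 0 < m ∧ H^[m] b - H^[m] a < δ := by
  set g : ℝ → ℝ := fun x => H^[n] x - p with hg_def
  have hHn : ∀ (x : ℝ) (k : ℤ), H^[n] (x + k) = H^[n] x + k := fun x k => by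
    rw [← CircleDeg1Lift.coe_pow, CircleDeg1Lift.map_add_int]
  have hgm : Monotone g := fun x y hxy => sub_le_sub_right (H.monotone.iterate n hxy) _
  have hfix : ∀ k : ℤ, IsFixedPt g (x₀ + k) := fun k => by
    simp only [IsFixedPt, hg_def, hHn, hx₀]
    ring
  have hgy : g y ≠ y := fun h => hy (by linarith [show H^[n] y - p = y from h])
  have hiter : ∀ j x, H^[n * j] x = g^[j] x + j * p := by
    intro j
    induction j with
    | zero => simp
    | succ j ih =>
      intro x
      rw [mul_add_one, add_comm, iterate_add_apply, ih, iterate_succ_apply']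
      have := hHn (g^[j] x) (j * p)
      push_cast at this ⊢
      rw [this]
      simp only [hg_def]
      ring
  have hT := tendsto_iterate_succ_sub_iterate hgm (y := y) (hfix ⌊y - x₀⌋) (hfix (⌊y - x₀⌋ + 1))
    (by linarith [Int.floor_le (y - x₀)]) (by push_cast; linarith [Int.lt_floor_add_one (y - x₀)])
  refine ⟨min y (g y), max y (g y), min_lt_max.2 hgy.symm, fun δ hδ => ?_⟩
  obtain ⟨j, hj, hjδ⟩ := ((eventually_gt_atTop 0).and (Metric.tendsto_nhds.1 hT δ hδ)).exists
  refine ⟨n * j, Nat.mul_pos hn hj, ?_⟩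
  rw [hiter, hiter, add_sub_add_right_eq_sub, (hgm.iterate j).map_max, (hgm.iterate j).map_min,
    max_sub_min_eq_abs', abs_sub_comm, ← iterate_succ_apply]
  simpa using hjδ

open Pointwise in
theorem mem_stabilizer_range_of_surjective {F φ : ℝ → ℝ} (hφ : Surjective φ) {c : ℝ}
    (hF : ∀ x, F (φ x) = F x + c) : c ∈ AddAction.stabilizer ℝ (range F) := by
  rw [AddAction.mem_stabilizer_iff]
  ext y
  simp only [mem_vadd_set, mem_range, vadd_eq_add, exists_exists_eq_and]
  constructor
  · rintro ⟨x, rfl⟩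
    exact ⟨φ x, by rw [hF, add_comm]⟩
  · rintro ⟨x, rfl⟩
    obtain ⟨x', rfl⟩ := hφ x
    exact ⟨x', by rw [hF, add_comm]⟩

open Pointwise in
/-- The range of `F` is invariant under the dense group generated by `τ` and `1`, and a monotone
map with dense range is continuous. -/
theorem continuous_of_semiconj_add_irrational (F : CircleDeg1Lift) {H : ℝ → ℝ}
    (hH : Surjective H) {τ : ℝ} (hτ : Irrational τ) (hF : ∀ x, F (H x) = F x + τ) :
    Continuous F := by
  have hle : AddSubgroup.closure {τ, 1} ≤ AddAction.stabilizer ℝ (range F) := by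
    rw [AddSubgroup.closure_le, pair_subset_iff]
    exact ⟨mem_stabilizer_range_of_surjective hH hF,
      mem_stabilizer_range_of_surjective (add_right_surjective 1) F.map_add_one⟩
  have hdense : Dense (AddSubgroup.closure {τ, 1} : Set ℝ) :=
    dense_addSubgroupClosure_pair_iff.2 (by simpa using hτ)
  refine F.monotone.continuous_of_denseRange ((hdense.vadd (F 0)).mono ?_)
  rintro _ ⟨c, hc, rfl⟩
  have := AddAction.mem_stabilizer_iff.1 (hle hc)
  rw [← this]
  exact ⟨F 0, mem_range_self 0, by simp [add_comm]⟩

open MeasureTheory in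
theorem sum_sub_le_of_pairwiseDisjoint_Icc {ι : Type*} {s : Finset ι} {x y : ι → ℝ} {A B : ℝ}
    (hxy : ∀ i ∈ s, x i ≤ y i) (hAB : A ≤ B) (hsub : ∀ i ∈ s, Icc (x i) (y i) ⊆ Icc A B)
    (hdisj : (s : Set ι).PairwiseDisjoint fun i => Icc (x i) (y i)) :
    ∑ i ∈ s, (y i - x i) ≤ B - A := by
  rw [← ENNReal.ofReal_le_ofReal_iff (sub_nonneg.2 hAB),
    ENNReal.ofReal_sum_of_nonneg fun i hi => sub_nonneg.2 (hxy i hi)]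
  simp only [← Real.volume_Icc]
  rw [← measure_biUnion_finset hdisj fun i _ => measurableSet_Icc]
  exact measure_mono (iUnion₂_subset hsub)

theorem apply_iterate_eq_add_mul {F H : ℝ → ℝ} {τ : ℝ} (hF : ∀ x, F (H x) = F x + τ)
    (j : ℕ) (x : ℝ) :
    F (H^[j] x) = F x + j * τ := by
  induction j with
  | zero => simp
  | succ j ih =>
    rw [iterate_succ_apply', hF, ih]
    push_cast
    ring

/-- Translated back to a fundamental domain of `F`, the images of an interval on which `F` is
constant are pairwise disjoint, because `F` takes the distinct values `F a + fract (j τ)` on them;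
hence their lengths cannot stay bounded below. -/
theorem exists_iterate_sub_lt_of_flat (F : CircleDeg1Lift) {H : ℝ → ℝ} (hH : Monotone H)
    {τ : ℝ} (hτ : Irrational τ) (hF : ∀ x, F (H x) = F x + τ) {a b : ℝ} (hab : a ≤ b)
    (hFab : F a = F b) {δ : ℝ} (hδ : 0 < δ) : ∃ n, 0 < n ∧ H^[n] b - H^[n] a < δ := by
  by_contra! hlen
  obtain ⟨N, hN⟩ := exists_nat_gt (2 / δ)
  set x : ℕ → ℝ := fun j => H^[j] a - ⌊j * τ⌋
  set y : ℕ → ℝ := fun j => H^[j] b - ⌊j * τ⌋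
  have hFI : ∀ j, ∀ z ∈ Icc (x j) (y j), F z = F a + Int.fract (j * τ) := by
    intro j z hz
    have hx : F (x j) = F a + Int.fract (j * τ) := by
      simp only [x, F.map_sub_int, apply_iterate_eq_add_mul hF, Int.fract]
      ring
    have hy : F (y j) = F a + Int.fract (j * τ) := by
      simp only [y, F.map_sub_int, apply_iterate_eq_add_mul hF, Int.fract, hFab]
      ring
    exact le_antisymm (hy ▸ F.monotone hz.2) (hx ▸ F.monotone hz.1)
  have hdisj : (Finset.Icc 1 N : Set ℕ).PairwiseDisjoint fun j => Icc (x j) (y j) := by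
    intro i _ j _ hij
    refine Set.disjoint_left.2 fun z hzi hzj => ?_
    obtain ⟨m, hm⟩ :=
      Int.fract_eq_fract.1 (add_left_cancel ((hFI i z hzi).symm.trans (hFI j z hzj)))
    have : ((i - j : ℤ) : ℝ) * τ = m := by push_cast; linarith
    exact (hτ.intCast_mul (sub_ne_zero.2 (by exact_mod_cast hij))).ne_int m this
  have hsub : ∀ j ∈ Finset.Icc 1 N, Icc (x j) (y j) ⊆ Icc (a - 1) (a + 1) := by
    intro j _ z hz
    have h := hFI j z hz
    have h0 := Int.fract_nonneg ((j : ℝ) * τ)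
    have h1 := Int.fract_lt_one ((j : ℝ) * τ)
    constructor
    · by_contra! hlt
      have := F.monotone hlt.le
      rw [show a - 1 = a - ((1 : ℤ) : ℝ) by simp, F.map_sub_int] at this
      push_cast at this
      linarith
    · by_contra! hlt
      have := F.monotone hlt.le
      rw [F.map_add_one] at this
      linarith
  have hsum := sum_sub_le_of_pairwiseDisjoint_Icc
    (fun j _ => sub_le_sub_right (hH.iterate j hab) _) (by linarith) hsub hdisj
  have hlow : N * δ ≤ ∑ j ∈ Finset.Icc 1 N, (y j - x j) := by
    have := Finset.card_nsmul_le_sum (Finset.Icc 1 N) (fun j => y j - x j) δ fun j hj => by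
      simpa [x, y] using hlen j (Finset.mem_Icc.1 hj).1
    simpa using this
  rw [div_lt_iff₀ hδ] at hN
  linarith

theorem isConjRotation_or_exists_iterate_sub_lt {h : 𝕊 → 𝕊} (H : CircleDeg1Lift)
    (hc : Continuous H) (hs : StrictMono H) (hH : Semiconj ((↑) : ℝ → 𝕊) H h) :
    IsConjRotation h ∨ ∃ a b, a < b ∧ ∀ δ > 0, ∃ n, 0 < n ∧ H^[n] b - H^[n] a < δ := by
  set τ := H.translationNumber
  by_cases hτ : Irrational τ
  · have hbij : Bijective H := ⟨hs.injective, (CircleDeg1Lift.continuous_iff_surjective H).1 hc⟩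
    obtain ⟨F, hF⟩ := CircleDeg1Lift.semiconj_of_bijective_of_translationNumber_eq hbij
      (CircleDeg1Lift.isUnit_iff_bijective.1 (Units.isUnit _))
      (CircleDeg1Lift.translationNumber_translate τ).symm
    have hF' : ∀ x, F (H x) = F x + τ := fun x => by
      rw [hF x, CircleDeg1Lift.translate_apply, add_comm]
    have hFc := continuous_of_semiconj_add_irrational F hbij.2 hτ hF'
    by_cases hFs : StrictMono F
    · exact Or.inl (isConjRotation_of_semiconj_add hH F hFc hFs hF')
    · obtain ⟨a, b, hab, hba⟩ : ∃ a b, a < b ∧ F b ≤ F a := by simpa [StrictMono] using hFs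
      exact Or.inr ⟨a, b, hab, fun δ hδ => exists_iterate_sub_lt_of_flat F H.monotone hτ hF' hab.le
        (le_antisymm (F.monotone hab.le) hba) hδ⟩
  · obtain ⟨q, hq⟩ := not_not.1 hτ
    obtain ⟨x₀, hx₀⟩ := (H.translationNumber_eq_rat_iff hc q.pos).1 (by rw [← Rat.cast_def, hq])
    rw [CircleDeg1Lift.coe_pow] at hx₀
    by_cases hid : ∀ x, H^[q.den] x = x + q.num
    · exact Or.inl (isConjRotation_of_iterate_eq_add_int H hc hs hH q.pos hid)
    · obtain ⟨y, hy⟩ := not_forall.1 hid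
      exact Or.inr (exists_iterate_sub_lt_of_iterate_eq_add_int H q.pos hx₀ hy)

theorem mapsTo_image_Icc_closedBall {g : 𝕊 → 𝕊} {L : ℝ → ℝ} (hL : Monotone L)
    (hgL : Semiconj ((↑) : ℝ → 𝕊) L g) (a b : ℝ) :
    MapsTo g ((↑) '' Icc a b) (closedBall (L a : 𝕊) (L b - L a)) := by
  rintro _ ⟨x, hx, rfl⟩
  rw [← hgL, mem_closedBall]
  refine (dist_coe_le _ _).trans ?_
  rw [abs_of_nonneg (sub_nonneg.2 (hL hx.1))]
  exact sub_le_sub_right (hL hx.2) _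

theorem dense_setOf_isFixedPt_of_contracting {k : ℕ} (f : Fin k → 𝕊 ≃ₜ 𝕊) {G : Fin k → ℝ → ℝ}
    (hGc : ∀ i, Continuous (G i)) (hfG : ∀ i, Semiconj ((↑) : ℝ → 𝕊) (G i) (f i))
    (hfwd : ∀ x : 𝕊,
      Dense {y | ∃ l : List (Fin k), l ≠ [] ∧ y = listComp (fun i => ⇑(f i)) l x})
    (hbwd : ∀ x : 𝕊,
      Dense {y | ∃ l : List (Fin k), l ≠ [] ∧ y = listComp (fun i => ⇑(f i).symm) l x})
    {V : Set 𝕊} (hVo : IsOpen V) (hVne : V.Nonempty)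
    (hV : ∀ δ > 0, ∃ w : List (Fin k), w ≠ [] ∧
      ∃ z, MapsTo (listComp (fun i => ⇑(f i)) w) V (ball z δ)) :
    Dense {q : 𝕊 | ∃ l : List (Fin k), l ≠ [] ∧ listComp (fun i => ⇑(f i)) l q = q} := by
  have hcont := continuous_listComp fun i => (f i).continuous
  refine dense_iff_inter_open.2 fun U hU ⟨u, hu⟩ => ?_
  obtain ⟨ε, hε, hεU⟩ := Metric.isOpen_iff.1 hU u hu
  obtain ⟨a, ha⟩ := hVne
  obtain ⟨_, ⟨u₁, -, rfl⟩, hpu⟩ :=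
    (hbwd a).exists_mem_open isOpen_ball ⟨u, mem_ball_self (half_pos hε)⟩
  set p := listComp (fun i => ⇑(f i).symm) u₁ a
  have hpV : p ∈ listComp (fun i => ⇑(f i)) u₁.reverse ⁻¹' V := by
    rwa [mem_preimage, listComp_reverse_listComp_symm]
  obtain ⟨r, hr, hrV⟩ := nhds_basis_closedBall.mem_iff.1 ((hVo.preimage (hcont _)).mem_nhds hpV)
  set ρ := min r (min (ε / 2) (1 / 4))
  have hρ : 0 < ρ := by positivity
  obtain ⟨δ, hδ, hδw⟩ := exists_forall_mapsTo_ball (fun i => (f i).continuous) hfwd isOpen_ball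
    ⟨p, mem_ball_self hρ⟩
  obtain ⟨w₂, hw₂, z, hz⟩ := hV δ hδ
  obtain ⟨w₃, -, hw₃⟩ := hδw z
  have hmaps : MapsTo (listComp (fun i => ⇑(f i)) (u₁.reverse ++ w₂ ++ w₃))
      (closedBall p ρ) (closedBall p ρ) := by
    rw [listComp_append, listComp_append]
    refine ((hw₃.comp hz).comp ?_).mono_right ball_subset_closedBall
    exact (mapsTo_iff_subset_preimage.2 hrV).mono_left
      (closedBall_subset_closedBall (min_le_left _ _))
  obtain ⟨q, hq, hqfix⟩ := exists_isFixedPt_of_mapsTo_closedBall (continuous_listComp hGc _)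
    (semiconj_listComp hfG _) hρ.le
    ((min_le_right _ _).trans_lt ((min_le_right _ _).trans_lt (by norm_num))) hmaps
  refine ⟨q, hεU ?_, _, by simp [hw₂], hqfix⟩
  rw [mem_closedBall] at hq
  rw [mem_ball] at hpu ⊢
  linarith [dist_triangle q p u, min_le_right r (min (ε / 2) (1 / 4)),
    min_le_left (ε / 2) (1 / 4)]

end CircleIFS

open CircleIFS

theorem dense_periodic_points_of_forward_backward_minimal_IFS
    {k : ℕ} (f : Fin k → (AddCircle (1 : ℝ) ≃ₜ AddCircle (1 : ℝ)))
    -- each generator is orientation-preserving: it has a strictly monotone degree-one lift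
    (hor : ∀ i : Fin k, ∃ G : ℝ → ℝ, StrictMono G ∧ Continuous G ∧
      (∀ x : ℝ, G (x + 1) = G x + 1) ∧
      ∀ x : ℝ, f i ((x : ℝ) : AddCircle (1 : ℝ)) = ((G x : ℝ) : AddCircle (1 : ℝ)))
    -- forward minimality
    (hfwd : ∀ x : AddCircle (1 : ℝ),
      Dense {y | ∃ l : List (Fin k), l ≠ [] ∧ y = listComp (fun i => ⇑(f i)) l x})
    -- backward minimality
    (hbwd : ∀ x : AddCircle (1 : ℝ),
      Dense {y | ∃ l : List (Fin k), l ≠ [] ∧ y = listComp (fun i => ⇑(f i).symm) l x})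
    -- some element of the semigroup is not conjugate to a rotation
    (hnotrot : ∃ l : List (Fin k), l ≠ [] ∧
      ¬ ∃ (φ : AddCircle (1 : ℝ) ≃ₜ AddCircle (1 : ℝ)) (c : AddCircle (1 : ℝ)),
          ∀ x, φ (listComp (fun i => ⇑(f i)) l (φ.symm x)) = c + x) :
    Dense {q : AddCircle (1 : ℝ) |
      ∃ l : List (Fin k), l ≠ [] ∧ listComp (fun i => ⇑(f i)) l q = q} := by
  choose G hGs hGc hG1 hfG using hor
  have hlift : ∀ i, Semiconj ((↑) : ℝ → 𝕊) (G i) (f i) := fun i x => (hfG i x).symm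
  obtain ⟨l, hl, hnr⟩ := hnotrot
  let H : CircleDeg1Lift := ⟨⟨listComp G l, (strictMono_listComp hGs l).monotone⟩,
    fun x => (semiconj_listComp (π := (· + 1)) (fun i x => (hG1 i x).symm) l x).symm⟩
  have hH : Semiconj ((↑) : ℝ → 𝕊) H (listComp (fun i => ⇑(f i)) l) := semiconj_listComp hlift l
  obtain ⟨a, b, hab, hcontr⟩ := (isConjRotation_or_exists_iterate_sub_lt H
    (continuous_listComp hGc l) (strictMono_listComp hGs l) hH).resolve_left hnr
  refine dense_setOf_isFixedPt_of_contracting f hGc hlift hfwd hbwd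
    (QuotientAddGroup.isOpenMap_coe _ isOpen_Ioo) ((nonempty_Ioo.2 hab).image _) fun δ hδ => ?_
  obtain ⟨n, hn, hlt⟩ := hcontr δ hδ
  refine ⟨(List.replicate n l).flatten, by simp [hl, hn.ne'], ?_⟩
  rw [listComp_flatten_replicate]
  exact ⟨_, ((mapsTo_image_Icc_closedBall (H.monotone.iterate n) (hH.iterate_right n) a b).mono_left
    (image_mono Ioo_subset_Icc_self)).mono_right (closedBall_subset_ball hlt)⟩
end
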